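/- arXiv:2101.09347 — 2 statements merged into one kernel-verified Lean document; each statement's English description precedes it below -/
import Mathlib

section
/- Let f : ℝ^p → ℝ be differentiable, μ-strongly convex with μ > 0, with L-Lipschitz gradient, 0 < μ ≤ L, and let x* satisfy ∇f(x*) = 0. If 0 < α ≤ 2/(μ + L), then for every x, ε ∈ ℝ^p, ‖x − x* − ε − α∇f(x)‖² ≤ (2 − 4αμL/(μ + L))‖x − x*‖² + 2‖ε‖². -/
open scoped RealInnerProductSpace

variable {E : Type*} [NormedAddCommGroup E] [InnerProductSpace ℝ E] [CompleteSpace E]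

/-- Descent lemma: L-Lipschitz gradient gives a quadratic upper bound. -/
lemma descent_lemma (f : E → ℝ) (g : E → E) (L : ℝ)
    (hgrad : ∀ x, HasGradientAt f (g x) x)
    (hlip : ∀ x y, ‖g x - g y‖ ≤ L * ‖x - y‖) :
    ∀ x y, f y ≤ f x + ⟪g x, y - x⟫ + L / 2 * ‖y - x‖ ^ 2 := by
  intro x y
  set d := y - x with hd
  set ψ : ℝ → ℝ := fun t => f (x + t • d) - t * ⟪g x, d⟫ - L / 2 * t ^ 2 * ‖d‖ ^ 2 with hψdef
  have key : ∀ t : ℝ, HasDerivAt (fun t => f (x + t • d)) ⟪g (x + t • d), d⟫ t := by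
    intro t
    have hline : HasDerivAt (fun t : ℝ => x + t • d) d t := by
      simpa using ((hasDerivAt_id t).smul_const d).const_add x
    have := (hgrad (x + t • d)).hasFDerivAt.comp_hasDerivAt t hline
    simpa [InnerProductSpace.toDual_apply_apply, Function.comp_def] using this
  have hψ : ∀ t : ℝ, HasDerivAt ψ
      (⟪g (x + t • d), d⟫ - ⟪g x, d⟫ - L * t * ‖d‖ ^ 2) t := by
    intro t
    have h2 : HasDerivAt (fun t : ℝ => t * ⟪g x, d⟫) ⟪g x, d⟫ t := by
      simpa using (hasDerivAt_id t).mul_const ⟪g x, d⟫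
    have h3 : HasDerivAt (fun t : ℝ => L / 2 * t ^ 2 * ‖d‖ ^ 2) (L * t * ‖d‖ ^ 2) t := by
      have h1 : HasDerivAt (fun t : ℝ => t ^ 2) (2 * t) t := by
        simpa using hasDerivAt_pow 2 t
      have := (h1.const_mul (L / 2)).mul_const (‖d‖ ^ 2)
      exact this.congr_deriv (by ring)
    exact ((key t).sub h2).sub h3
  have hdiff : Differentiable ℝ ψ := fun t => (hψ t).differentiableAt
  have hanti : AntitoneOn ψ (Set.Icc 0 1) := by
    apply antitoneOn_of_deriv_nonpos (convex_Icc 0 1) hdiff.continuous.continuousOn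
      hdiff.differentiableOn
    intro t ht
    rw [interior_Icc] at ht
    rw [(hψ t).deriv]
    have hle : ⟪g (x + t • d), d⟫ - ⟪g x, d⟫ ≤ L * t * ‖d‖ ^ 2 := by
      have h1 : ⟪g (x + t • d), d⟫ - ⟪g x, d⟫ = ⟪g (x + t • d) - g x, d⟫ := by
        rw [inner_sub_left]
      have h2 : ⟪g (x + t • d) - g x, d⟫ ≤ ‖g (x + t • d) - g x‖ * ‖d‖ :=
        real_inner_le_norm _ _
      have h3 : ‖g (x + t • d) - g x‖ ≤ L * (t * ‖d‖) := by
        have := hlip (x + t • d) x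
        simpa [norm_smul, Real.norm_eq_abs, abs_of_pos ht.1] using this
      have h4 : ‖g (x + t • d) - g x‖ * ‖d‖ ≤ L * (t * ‖d‖) * ‖d‖ :=
        mul_le_mul_of_nonneg_right h3 (norm_nonneg d)
      calc ⟪g (x + t • d), d⟫ - ⟪g x, d⟫ = ⟪g (x + t • d) - g x, d⟫ := h1
        _ ≤ ‖g (x + t • d) - g x‖ * ‖d‖ := h2
        _ ≤ L * (t * ‖d‖) * ‖d‖ := h4
        _ = L * t * ‖d‖ ^ 2 := by ring
    linarith
  have := hanti (Set.mem_Icc.2 ⟨le_refl 0, zero_le_one⟩)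
    (Set.mem_Icc.2 ⟨zero_le_one, le_refl 1⟩) zero_le_one
  have e1 : ψ 1 = f y - ⟪g x, d⟫ - L / 2 * ‖d‖ ^ 2 := by
    simp [hψdef, hd]
  have e0 : ψ 0 = f x := by simp [hψdef]
  rw [e1, e0] at this
  linarith

/-- Co-coercivity-type bound for strongly convex functions with Lipschitz gradient. -/
lemma coco (f : E → ℝ) (g : E → E) (μ L : ℝ) (hμL : μ ≤ L)
    (hsc : ∀ x y, f x ≥ f y + ⟪g y, x - y⟫ + μ / 2 * ‖x - y‖ ^ 2)
    (hdesc : ∀ x y, f y ≤ f x + ⟪g x, y - x⟫ + L / 2 * ‖y - x‖ ^ 2)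
    (x y : E) :
    (L - μ) * ⟪(g x - g y) - μ • (x - y), x - y⟫ ≥
      ‖(g x - g y) - μ • (x - y)‖ ^ 2 := by
  set K := L - μ with hK
  -- h z = f z - μ/2 ‖z‖²; its gradient is g z - μ • z
  set h : E → ℝ := fun z => f z - μ / 2 * ‖z‖ ^ 2 with hh
  have expand : ∀ a b : E, ‖b‖ ^ 2 = ‖a‖ ^ 2 + 2 * ⟪a, b - a⟫ + ‖b - a‖ ^ 2 := by
    intro a b
    have h := norm_add_sq_real a (b - a)
    have e : a + (b - a) = b := by abel
    rw [e] at h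
    linarith
  have inner_grad : ∀ a b : E, ⟪g a - μ • a, b - a⟫ = ⟪g a, b - a⟫ - μ * ⟪a, b - a⟫ := by
    intro a b
    rw [inner_sub_left, real_inner_smul_left]
  have hA : ∀ a b : E, h b ≥ h a + ⟪g a - μ • a, b - a⟫ := by
    intro a b
    have h1 := hsc b a
    have h2 := expand a b
    rw [inner_grad]
    simp only [hh]
    have h3 : μ / 2 * ‖b‖ ^ 2 = μ / 2 * ‖a‖ ^ 2 + μ * ⟪a, b - a⟫ + μ / 2 * ‖b - a‖ ^ 2 := by
      rw [h2]; ring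
    linarith
  have hB : ∀ a b : E, h b ≤ h a + ⟪g a - μ • a, b - a⟫ + K / 2 * ‖b - a‖ ^ 2 := by
    intro a b
    have h1 := hdesc a b
    have h2 := expand a b
    rw [inner_grad]
    simp only [hh, hK]
    have h3 : μ / 2 * ‖b‖ ^ 2 = μ / 2 * ‖a‖ ^ 2 + μ * ⟪a, b - a⟫ + μ / 2 * ‖b - a‖ ^ 2 := by
      rw [h2]; ring
    linarith
  set u : E := (g x - g y) - μ • (x - y) with hu
  have hu' : u = (g x - μ • x) - (g y - μ • y) := by
    simp [hu, smul_sub]; abel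
  -- key inequality for all t
  have keyt : ∀ t : ℝ, ⟪u, x - y⟫ ≥ 2 * t * ‖u‖ ^ 2 - K * t ^ 2 * ‖u‖ ^ 2 := by
    intro t
    have hA1 := hA y (x - t • u)
    have hB1 := hB x (x - t • u)
    have hA2 := hA x (y + t • u)
    have hB2 := hB y (y + t • u)
    have e1 : (x - t • u) - x = -(t • u) := by abel
    have e2 : (y + t • u) - y = t • u := by abel
    rw [e1] at hB1
    rw [e2] at hB2
    have e3 : (x - t • u) - y = (x - y) - t • u := by abel
    have e4 : (y + t • u) - x = -((x - y) - t • u) := by abel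
    rw [e3] at hA1
    rw [e4] at hA2
    have n1 : ‖-(t • u)‖ ^ 2 = t ^ 2 * ‖u‖ ^ 2 := by
      rw [norm_neg, norm_smul, Real.norm_eq_abs, mul_pow, sq_abs]
    have n2 : ‖t • u‖ ^ 2 = t ^ 2 * ‖u‖ ^ 2 := by
      rw [norm_smul, Real.norm_eq_abs, mul_pow, sq_abs]
    rw [n1] at hB1
    rw [n2] at hB2
    have i1 : ⟪g x - μ • x, -(t • u)⟫ = -t * ⟪g x - μ • x, u⟫ := by
      rw [inner_neg_right, real_inner_smul_right]; ring
    have i2 : ⟪g y - μ • y, (x - y) - t • u⟫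
        = ⟪g y - μ • y, x - y⟫ - t * ⟪g y - μ • y, u⟫ := by
      rw [inner_sub_right, real_inner_smul_right]
    have i3 : ⟪g y - μ • y, t • u⟫ = t * ⟪g y - μ • y, u⟫ := real_inner_smul_right _ _ _
    have i4 : ⟪g x - μ • x, -((x - y) - t • u)⟫
        = -⟪g x - μ • x, x - y⟫ + t * ⟪g x - μ • x, u⟫ := by
      rw [inner_neg_right, inner_sub_right, real_inner_smul_right]; ring
    rw [i1] at hB1
    rw [i3] at hB2
    rw [i2] at hA1
    rw [i4] at hA2
    have isum : ⟪g x - μ • x, u⟫ - ⟪g y - μ • y, u⟫ = ‖u‖ ^ 2 := by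
      rw [← inner_sub_left, ← hu', real_inner_self_eq_norm_sq]
    have idiff : ⟪g x - μ • x, x - y⟫ - ⟪g y - μ • y, x - y⟫ = ⟪u, x - y⟫ := by
      rw [← inner_sub_left, ← hu']
    have m1 : t * ⟪g x - μ • x, u⟫ - t * ⟪g y - μ • y, u⟫ = t * ‖u‖ ^ 2 := by
      rw [← mul_sub, isum]
    have c1 : h y + (⟪g y - μ • y, x - y⟫ - t * ⟪g y - μ • y, u⟫) ≤
        h x + -t * ⟪g x - μ • x, u⟫ + K / 2 * (t ^ 2 * ‖u‖ ^ 2) := le_trans hA1 hB1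
    have c2 : h x + (-⟪g x - μ • x, x - y⟫ + t * ⟪g x - μ • x, u⟫) ≤
        h y + t * ⟪g y - μ • y, u⟫ + K / 2 * (t ^ 2 * ‖u‖ ^ 2) := le_trans hA2 hB2
    clear_value K h u
    linarith [c1, c2, m1, idiff]
  have hK0 : 0 ≤ K := by simp [hK]; linarith
  rcases eq_or_lt_of_le hK0 with hKeq | hKpos
  · -- K = 0 : show u = 0
    have hz : ‖u‖ ^ 2 ≤ 0 := by
      by_contra hcon
      push_neg at hcon
      have := keyt ((⟪u, x - y⟫ + 1) / (2 * ‖u‖ ^ 2))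
      rw [← hKeq] at this
      have h2 : 2 * ((⟪u, x - y⟫ + 1) / (2 * ‖u‖ ^ 2)) * ‖u‖ ^ 2 = ⟪u, x - y⟫ + 1 := by
        have hne : ‖u‖ ≠ 0 := by intro h0; rw [h0] at hcon; norm_num at hcon
        field_simp
      rw [h2] at this
      simp at this
      linarith
    have : ⟪u, x - y⟫ ≥ 0 := by nlinarith [keyt 0]
    nlinarith [sq_nonneg ‖u‖]
  · -- K > 0
    have := keyt (1 / K)
    have h2 : 2 * (1 / K) * ‖u‖ ^ 2 - K * (1 / K) ^ 2 * ‖u‖ ^ 2 = ‖u‖ ^ 2 / K := by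
      field_simp
      ring
    rw [h2] at this
    rw [ge_iff_le, div_le_iff₀ hKpos] at this
    nlinarith


set_option maxHeartbeats 1000000 in
/-- One-step bound with the gradient term dropped (Eq. (11) of the paper):
if 0 < α ≤ 2/(μ+L), then
‖x − x* − ε − α∇f(x)‖² ≤ (2 − 4αμL/(μ+L))‖x − x*‖² + 2‖ε‖². -/
theorem stmt5 {p : ℕ} (μ L α : ℝ) (hμ : 0 < μ) (hμL : μ ≤ L)
    (hα0 : 0 < α) (hα : α ≤ 2 / (μ + L))
    (f : EuclideanSpace ℝ (Fin p) → ℝ)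
    (g : EuclideanSpace ℝ (Fin p) → EuclideanSpace ℝ (Fin p))
    (hgrad : ∀ x, HasGradientAt f (g x) x)
    (hsc : ∀ x y, f x ≥ f y + ⟪g y, x - y⟫ + μ / 2 * ‖x - y‖ ^ 2)
    (hlip : ∀ x y, ‖g x - g y‖ ≤ L * ‖x - y‖)
    (xstar : EuclideanSpace ℝ (Fin p)) (hstat : g xstar = 0) :
    ∀ x ε : EuclideanSpace ℝ (Fin p),
      ‖x - xstar - ε - α • g x‖ ^ 2 ≤
        (2 - 4 * α * μ * L / (μ + L)) * ‖x - xstar‖ ^ 2 + 2 * ‖ε‖ ^ 2 := by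
  intro x ε
  have hS : (0 : ℝ) < μ + L := by linarith
  have hdesc := descent_lemma f g L hgrad hlip
  have hco := coco f g μ L hμL hsc hdesc x xstar
  rw [hstat, sub_zero] at hco
  set d : EuclideanSpace ℝ (Fin p) := x - xstar with hd
  set G : EuclideanSpace ℝ (Fin p) := g x with hG
  clear_value d G
  clear hgrad hsc hlip hdesc hstat hG
  -- expand the co-coercivity inequality
  have iud : ⟪G - μ • d, d⟫ = ⟪G, d⟫ - μ * ‖d‖ ^ 2 := by
    rw [inner_sub_left, real_inner_smul_left, real_inner_self_eq_norm_sq]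
  have nu : ‖G - μ • d‖ ^ 2 = ‖G‖ ^ 2 - 2 * (μ * ⟪G, d⟫) + μ ^ 2 * ‖d‖ ^ 2 := by
    rw [norm_sub_sq_real, real_inner_smul_right, norm_smul, Real.norm_eq_abs,
      abs_of_pos hμ, mul_pow]
  rw [iud, nu] at hco
  have key : (μ + L) * ⟪G, d⟫ ≥ μ * L * ‖d‖ ^ 2 + ‖G‖ ^ 2 := by nlinarith [hco]
  -- bound on ‖d - α • G‖²
  have hαS : α * (μ + L) ≤ 2 := by
    rw [le_div_iff₀ hS] at hα
    linarith
  have h1 : 2 * α * ((μ + L) * ⟪G, d⟫ - (μ * L * ‖d‖ ^ 2 + ‖G‖ ^ 2)) ≥ 0 :=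
    mul_nonneg (by positivity) (by linarith)
  have h2 : (2 - α * (μ + L)) * (α * ‖G‖ ^ 2) ≥ 0 :=
    mul_nonneg (by linarith) (by positivity)
  have ndag : ‖d - α • G‖ ^ 2 = ‖d‖ ^ 2 - 2 * (α * ⟪d, G⟫) + α ^ 2 * ‖G‖ ^ 2 := by
    rw [norm_sub_sq_real, real_inner_smul_right, norm_smul, Real.norm_eq_abs,
      abs_of_pos hα0, mul_pow]
  have isym : ⟪d, G⟫ = ⟪G, d⟫ := real_inner_comm _ _
  have bound1 : ‖d - α • G‖ ^ 2 ≤ (1 - 2 * α * μ * L / (μ + L)) * ‖d‖ ^ 2 := by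
    rw [ndag, isym]
    have Sgoal : (μ + L) * (‖d‖ ^ 2 - 2 * (α * ⟪G, d⟫) + α ^ 2 * ‖G‖ ^ 2) ≤
        (μ + L) * ((1 - 2 * α * μ * L / (μ + L)) * ‖d‖ ^ 2) := by
      have e : (μ + L) * ((1 - 2 * α * μ * L / (μ + L)) * ‖d‖ ^ 2) =
          (μ + L) * ‖d‖ ^ 2 - 2 * α * μ * L * ‖d‖ ^ 2 := by
        field_simp
      rw [e]
      nlinarith [h1, h2]
    exact le_of_mul_le_mul_left Sgoal hS
  -- combine with perturbation
  have esplit : d - ε - α • G = (d - α • G) - ε := by abel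
  rw [esplit]
  have tri : ‖(d - α • G) - ε‖ ≤ ‖d - α • G‖ + ‖ε‖ := norm_sub_le _ _
  have sq2 : ‖(d - α • G) - ε‖ ^ 2 ≤ 2 * ‖d - α • G‖ ^ 2 + 2 * ‖ε‖ ^ 2 := by
    nlinarith [tri, norm_nonneg ((d - α • G) - ε), norm_nonneg (d - α • G), norm_nonneg ε,
      sq_nonneg (‖d - α • G‖ - ‖ε‖)]
  have e2 : (2 - 4 * α * μ * L / (μ + L)) = 2 * (1 - 2 * α * μ * L / (μ + L)) := by
    field_simp
    ring
  rw [e2]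
  nlinarith [sq2, bound1]
end

section
/- (Lemma 1, complete-graph case, norm form.) Under the hypotheses: f : ℝ^p → ℝ differentiable, μ-strongly convex with μ > 0, L-Lipschitz gradient, 0 < μ ≤ L, ∇f(x*) = 0, step size (μ + L)/(4μL) < α ≤ 2/(μ + L), q := 2 − 4αμL/(μ + L) ∈ (0, 1), ε ∈ ℝ^p with all coordinates strictly positive, and x̄ : ℕ → ℝ^p with x̄(k+1) = x̄(k) − α∇f(x̄(k)) and all coordinates of x̄(k+1) − x* strictly negative for every k — one has, for every k ∈ ℕ, ‖x̄(k) − x*‖ ≤ q^{k/2}‖x̄(0) − x*‖ + √(2/(1 − q))·‖ε‖. -/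
open scoped RealInnerProductSpace

section Aux
variable {p : ℕ}
local notation "E" => EuclideanSpace ℝ (Fin p)

private lemma descent_aux10 (L : ℝ) (f : E → ℝ) (g : E → E)
    (hgrad : ∀ x, HasGradientAt f (g x) x)
    (hlip : ∀ x y, ‖g x - g y‖ ≤ L * ‖x - y‖) (x y : E) :
    f y ≤ f x + ⟪g x, y - x⟫ + L / 2 * ‖y - x‖ ^ 2 := by
  set u : E := y - x with hu
  set F : ℝ → ℝ := fun t => f (x + t • u) - t * ⟪g x, u⟫ - L / 2 * t ^ 2 * ‖u‖ ^ 2 with hF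
  have hd : ∀ t : ℝ, HasDerivAt F
      (⟪g (x + t • u), u⟫ - ⟪g x, u⟫ - L * t * ‖u‖ ^ 2) t := by
    intro t
    have hc : HasDerivAt (fun s : ℝ => x + s • u) u t := by
      simpa using ((hasDerivAt_id t).smul_const u).const_add x
    have h1 : HasDerivAt (fun s : ℝ => f (x + s • u)) ⟪g (x + t • u), u⟫ t := by
      have := ((hgrad (x + t • u)).hasFDerivAt).comp_hasDerivAt t hc
      simp at this
      exact this
    have h2 : HasDerivAt (fun s : ℝ => s * ⟪g x, u⟫) ⟪g x, u⟫ t := by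
      simpa using (hasDerivAt_id t).mul_const (⟪g x, u⟫)
    have h3 : HasDerivAt (fun s : ℝ => L / 2 * s ^ 2 * ‖u‖ ^ 2) (L * t * ‖u‖ ^ 2) t := by
      have h4 : HasDerivAt (fun s : ℝ => s ^ 2) (2 * t) t := by
        simpa using hasDerivAt_pow 2 t
      have := (h4.const_mul (L / 2)).mul_const (‖u‖ ^ 2)
      exact this.congr_deriv (by ring)
    exact (h1.sub h2).sub h3
  have hmono : AntitoneOn F (Set.Icc (0:ℝ) 1) := by
    apply antitoneOn_of_deriv_nonpos (convex_Icc 0 1)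
    · exact fun t _ => ((hd t).differentiableAt).continuousAt.continuousWithinAt
    · intro t ht
      exact ((hd t).differentiableAt).differentiableWithinAt
    · intro t ht
      rw [interior_Icc] at ht
      rw [(hd t).deriv]
      have h1 : ⟪g (x + t • u) - g x, u⟫ ≤ L * t * ‖u‖ ^ 2 := by
        calc ⟪g (x + t • u) - g x, u⟫ ≤ ‖g (x + t • u) - g x‖ * ‖u‖ :=
              real_inner_le_norm _ _
          _ ≤ L * ‖(x + t • u) - x‖ * ‖u‖ := by
              have := hlip (x + t • u) x
              nlinarith [norm_nonneg u]
          _ = L * (|t| * ‖u‖) * ‖u‖ := by rw [add_sub_cancel_left, norm_smul]; simp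
          _ = L * t * ‖u‖ ^ 2 := by rw [abs_of_pos ht.1]; ring
      have := inner_sub_left (𝕜 := ℝ) (g (x + t • u)) (g x) u
      linarith [this]
  have key := hmono (Set.mem_Icc.2 ⟨le_refl 0, zero_le_one⟩)
    (Set.mem_Icc.2 ⟨zero_le_one, le_refl 1⟩) zero_le_one
  simp only [hF, one_smul, zero_smul, add_zero, one_mul, one_pow, zero_pow, mul_zero,
    zero_mul, sub_zero] at key
  have hxy : x + u = y := by rw [hu]; abel
  rw [hxy] at key
  linarith

private lemma lower_aux10 (M : ℝ) (hM : 0 < M) (φ : E → ℝ) (G : E → E)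
    (hconv : ∀ x y, φ x + ⟪G x, y - x⟫ ≤ φ y)
    (hdesc : ∀ x y, φ y ≤ φ x + ⟪G x, y - x⟫ + M / 2 * ‖y - x‖ ^ 2) (x y : E) :
    φ x + ⟪G x, y - x⟫ + 1 / (2 * M) * ‖G y - G x‖ ^ 2 ≤ φ y := by
  set z : E := y - M⁻¹ • (G y - G x) with hz
  have h1 := hconv x z
  have h2 := hdesc y z
  have e1 : ⟪G y, z - y⟫ = -(M⁻¹ * ⟪G y, G y - G x⟫) := by
    rw [hz]; rw [show y - M⁻¹ • (G y - G x) - y = -(M⁻¹ • (G y - G x)) by abel]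
    rw [inner_neg_right, real_inner_smul_right]
  have e2 : ‖z - y‖ ^ 2 = M⁻¹ ^ 2 * ‖G y - G x‖ ^ 2 := by
    rw [hz, show y - M⁻¹ • (G y - G x) - y = -(M⁻¹ • (G y - G x)) by abel]
    rw [norm_neg, norm_smul]
    simp [abs_of_pos (inv_pos.2 hM), mul_pow]
  have e3 : ⟪G x, z - x⟫ = ⟪G x, y - x⟫ - M⁻¹ * ⟪G x, G y - G x⟫ := by
    rw [hz, show y - M⁻¹ • (G y - G x) - x = (y - x) - M⁻¹ • (G y - G x) by abel]
    rw [inner_sub_right, real_inner_smul_right]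
  have e4 : ⟪G y, G y - G x⟫ - ⟪G x, G y - G x⟫ = ‖G y - G x‖ ^ 2 := by
    rw [← inner_sub_left, real_inner_self_eq_norm_sq]
  rw [e1, e2] at h2
  rw [e3] at h1
  have hM' : M ≠ 0 := ne_of_gt hM
  have e5 : M⁻¹ * ⟪G y, G y - G x⟫ - M⁻¹ * ⟪G x, G y - G x⟫
      = M⁻¹ * ‖G y - G x‖ ^ 2 := by rw [← mul_sub, e4]
  have e6 : M / 2 * (M⁻¹ ^ 2 * ‖G y - G x‖ ^ 2) = 1 / (2 * M) * ‖G y - G x‖ ^ 2 := by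
    field_simp
  have e7 : M⁻¹ * ‖G y - G x‖ ^ 2 = 2 * (1 / (2 * M) * ‖G y - G x‖ ^ 2) := by
    field_simp
  linarith

private lemma phi_ineq10 (μ : ℝ) (f : E → ℝ) (g : E → E) (x y : E) :
    (f y - μ / 2 * ‖y‖ ^ 2) - ((f x - μ / 2 * ‖x‖ ^ 2) + ⟪g x - μ • x, y - x⟫)
      = f y - (f x + ⟪g x, y - x⟫ + μ / 2 * ‖y - x‖ ^ 2) := by
  have h1 : ⟪g x - μ • x, y - x⟫ = ⟪g x, y - x⟫ - μ * ⟪x, y - x⟫ := by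
    rw [inner_sub_left, real_inner_smul_left]
  have h2 : ‖y - x‖ ^ 2 = ‖y‖ ^ 2 - 2 * ⟪y, x⟫ + ‖x‖ ^ 2 := norm_sub_sq_real y x
  have h3 : ⟪x, y - x⟫ = ⟪x, y⟫ - ‖x‖ ^ 2 := by
    rw [inner_sub_right, real_inner_self_eq_norm_sq]
  have h4 : ⟪y, x⟫ = ⟪x, y⟫ := real_inner_comm x y
  rw [h1, h2, h3, h4]; ring

private lemma coercive10 (μ L : ℝ) (hμ : 0 < μ) (hμL : μ ≤ L)
    (f : E → ℝ) (g : E → E)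
    (hgrad : ∀ x, HasGradientAt f (g x) x)
    (hsc : ∀ x y, f x ≥ f y + ⟪g y, x - y⟫ + μ / 2 * ‖x - y‖ ^ 2)
    (hlip : ∀ x y, ‖g x - g y‖ ≤ L * ‖x - y‖) (x y : E) :
    μ * L / (μ + L) * ‖x - y‖ ^ 2 + 1 / (μ + L) * ‖g x - g y‖ ^ 2
      ≤ ⟪g x - g y, x - y⟫ := by
  have hL : 0 < L := lt_of_lt_of_le hμ hμL
  have hpos : 0 < μ + L := by linarith
  -- strong monotonicity
  have hmono : μ * ‖x - y‖ ^ 2 ≤ ⟪g x - g y, x - y⟫ := by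
    have a := hsc x y
    have b := hsc y x
    have h1 : ⟪g x, y - x⟫ = -⟪g x, x - y⟫ := by
      rw [show y - x = -(x - y) by abel, inner_neg_right]
    have h2 : ⟪g x - g y, x - y⟫ = ⟪g x, x - y⟫ - ⟪g y, x - y⟫ :=
      inner_sub_left _ _ _
    have h3 : ‖y - x‖ = ‖x - y‖ := norm_sub_rev _ _
    rw [h3, h1] at b
    linarith
  -- the key intermediate inequality: μ*L*‖x-y‖² + ‖gx-gy‖² ≤ (μ+L)*⟪gx-gy, x-y⟫
  have hsum : μ * L * ‖x - y‖ ^ 2 + ‖g x - g y‖ ^ 2 ≤ (μ + L) * ⟪g x - g y, x - y⟫ := by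
    rcases eq_or_lt_of_le hμL with heq | hlt
    · -- μ = L
      subst heq
      have hg2 : ‖g x - g y‖ ^ 2 ≤ μ ^ 2 * ‖x - y‖ ^ 2 := by
        nlinarith [hlip x y, norm_nonneg (x - y), norm_nonneg (g x - g y)]
      nlinarith [hg2, hmono, hμ]
    · -- μ < L
      set M : ℝ := L - μ with hMdef
      have hM : 0 < M := by simp [hMdef]; linarith
      set φ : E → ℝ := fun z => f z - μ / 2 * ‖z‖ ^ 2 with hφ
      set G : E → E := fun z => g z - μ • z with hG
      have hconv : ∀ a b, φ a + ⟪G a, b - a⟫ ≤ φ b := by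
        intro a b
        have h := phi_ineq10 μ f g a b
        have h' := hsc b a
        simp only [hφ, hG]
        linarith
      have hdesc : ∀ a b, φ b ≤ φ a + ⟪G a, b - a⟫ + M / 2 * ‖b - a‖ ^ 2 := by
        intro a b
        have h := phi_ineq10 μ f g a b
        have h' := descent_aux10 L f g hgrad hlip a b
        simp only [hφ, hG, hMdef]
        nlinarith [h, h']
      have l1 := lower_aux10 M hM φ G hconv hdesc x y
      have l2 := lower_aux10 M hM φ G hconv hdesc y x
      have hrev : ‖G x - G y‖ = ‖G y - G x‖ := norm_sub_rev _ _
      have hip : ⟪G x, y - x⟫ = -⟪G x, x - y⟫ := by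
        rw [show y - x = -(x - y) by abel, inner_neg_right]
      have hip2 : ⟪G x - G y, x - y⟫ = ⟪G x, x - y⟫ - ⟪G y, x - y⟫ :=
        inner_sub_left _ _ _
      -- from l1 + l2: (1/M)‖Gx - Gy‖² ≤ ⟪Gx - Gy, x - y⟫
      have hrev2 : ‖G x - G y‖ ^ 2 = ‖G y - G x‖ ^ 2 := by rw [norm_sub_rev]
      have key : 1 / M * ‖G x - G y‖ ^ 2 ≤ ⟪G x - G y, x - y⟫ := by
        have e8 : 1 / (2 * M) * ‖G y - G x‖ ^ 2 + 1 / (2 * M) * ‖G x - G y‖ ^ 2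
            = 1 / M * ‖G x - G y‖ ^ 2 := by
          rw [hrev2]; field_simp; ring
        linarith [l1, l2, hip, hip2, e8]
      -- expand G x - G y = (g x - g y) - μ • (x - y)
      have hGd : G x - G y = (g x - g y) - μ • (x - y) := by
        show (g x - μ • x) - (g y - μ • y) = (g x - g y) - μ • (x - y)
        rw [smul_sub]
        abel
      have hipd : ⟪G x - G y, x - y⟫ = ⟪g x - g y, x - y⟫ - μ * ‖x - y‖ ^ 2 := by
        rw [hGd, inner_sub_left, real_inner_smul_left, real_inner_self_eq_norm_sq]
      have hnd : ‖G x - G y‖ ^ 2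
          = ‖g x - g y‖ ^ 2 - 2 * μ * ⟪g x - g y, x - y⟫ + μ ^ 2 * ‖x - y‖ ^ 2 := by
        rw [hGd, norm_sub_sq_real, real_inner_smul_right, norm_smul,
          Real.norm_eq_abs, abs_of_pos hμ, mul_pow]
        ring
      rw [hipd, hnd] at key
      have key2 : ‖g x - g y‖ ^ 2 - 2 * μ * ⟪g x - g y, x - y⟫ + μ ^ 2 * ‖x - y‖ ^ 2
          ≤ M * (⟪g x - g y, x - y⟫ - μ * ‖x - y‖ ^ 2) := by
        rw [one_div, inv_mul_le_iff₀ hM] at key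
        exact key
      have hMeq : M = L - μ := hMdef
      nlinarith [key2]
  calc μ * L / (μ + L) * ‖x - y‖ ^ 2 + 1 / (μ + L) * ‖g x - g y‖ ^ 2
      = (μ * L * ‖x - y‖ ^ 2 + ‖g x - g y‖ ^ 2) / (μ + L) := by ring
    _ ≤ ((μ + L) * ⟪g x - g y, x - y⟫) / (μ + L) := by gcongr
    _ = ⟪g x - g y, x - y⟫ := by field_simp

end Aux

/-- Lemma 1 of the paper (complete-graph case, norm form):
‖x̄(k) − x*‖ ≤ q^{k/2}‖x̄(0) − x*‖ + √(2/(1−q))·‖ε‖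
with q = 2 − 4αμL/(μ+L). -/
theorem stmt10 {p : ℕ} (μ L α : ℝ) (hμ : 0 < μ) (hμL : μ ≤ L)
    (hα1 : (μ + L) / (4 * μ * L) < α) (hα2 : α ≤ 2 / (μ + L))
    (f : EuclideanSpace ℝ (Fin p) → ℝ)
    (g : EuclideanSpace ℝ (Fin p) → EuclideanSpace ℝ (Fin p))
    (hgrad : ∀ x, HasGradientAt f (g x) x)
    (hsc : ∀ x y, f x ≥ f y + ⟪g y, x - y⟫ + μ / 2 * ‖x - y‖ ^ 2)
    (hlip : ∀ x y, ‖g x - g y‖ ≤ L * ‖x - y‖)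
    (xstar : EuclideanSpace ℝ (Fin p)) (hstat : g xstar = 0)
    (ε : EuclideanSpace ℝ (Fin p)) (hε : ∀ i, 0 < ε i)
    (xbar : ℕ → EuclideanSpace ℝ (Fin p))
    (hupd : ∀ k, xbar (k + 1) = xbar k - α • g (xbar k))
    (hneg : ∀ k, ∀ i, (xbar (k + 1) - xstar) i < 0) :
    ∀ k : ℕ, ‖xbar k - xstar‖ ≤
      (2 - 4 * α * μ * L / (μ + L)) ^ ((k : ℝ) / 2) * ‖xbar 0 - xstar‖ +
        Real.sqrt (2 / (1 - (2 - 4 * α * μ * L / (μ + L)))) * ‖ε‖ := by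
  have hL : 0 < L := lt_of_lt_of_le hμ hμL
  have hpos : 0 < μ + L := by linarith
  have hα0 : 0 < α := lt_trans (by positivity) hα1
  set s : ℝ := 1 - 2 * α * μ * L / (μ + L) with hs
  -- s ≥ 0
  have hα2' : α * (μ + L) ≤ 2 := (le_div_iff₀ hpos).mp hα2
  have hs0 : 0 ≤ s := by
    rw [hs, sub_nonneg, div_le_one hpos]
    nlinarith [hα2', sq_nonneg (μ - L), mul_pos hμ hL]
  -- contraction step
  have step : ∀ k, ‖xbar (k + 1) - xstar‖ ^ 2 ≤ s * ‖xbar k - xstar‖ ^ 2 := by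
    intro k
    have hco := coercive10 μ L hμ hμL f g hgrad hsc hlip (xbar k) xstar
    have hx1 : xbar (k + 1) - xstar = (xbar k - xstar) - α • (g (xbar k) - g xstar) := by
      rw [hupd k, hstat]
      simp only [sub_zero]
      abel
    rw [hx1]
    have hexp : ‖(xbar k - xstar) - α • (g (xbar k) - g xstar)‖ ^ 2
        = ‖xbar k - xstar‖ ^ 2 - 2 * α * ⟪g (xbar k) - g xstar, xbar k - xstar⟫
          + α ^ 2 * ‖g (xbar k) - g xstar‖ ^ 2 := by
      rw [norm_sub_sq_real, real_inner_smul_right, norm_smul, Real.norm_eq_abs,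
        abs_of_pos hα0, mul_pow, real_inner_comm]
      ring
    rw [hexp, hs]
    have h2 : α ^ 2 * ‖g (xbar k) - g xstar‖ ^ 2
        ≤ α * (2 / (μ + L)) * ‖g (xbar k) - g xstar‖ ^ 2 := by
      have : α ^ 2 ≤ α * (2 / (μ + L)) := by nlinarith [hα2, hα0]
      exact mul_le_mul_of_nonneg_right this (sq_nonneg _)
    have h1 : 2 * α * (μ * L / (μ + L) * ‖xbar k - xstar‖ ^ 2
          + 1 / (μ + L) * ‖g (xbar k) - g xstar‖ ^ 2)
        ≤ 2 * α * ⟪g (xbar k) - g xstar, xbar k - xstar⟫ := by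
      nlinarith [hco, hα0]
    have e : α * (2 / (μ + L)) * ‖g (xbar k) - g xstar‖ ^ 2
        = 2 * α * (1 / (μ + L) * ‖g (xbar k) - g xstar‖ ^ 2) := by ring
    have e2 : 2 * α * (μ * L / (μ + L) * ‖xbar k - xstar‖ ^ 2)
        = 2 * α * μ * L / (μ + L) * ‖xbar k - xstar‖ ^ 2 := by ring
    nlinarith [h1, h2]
  -- iterate
  have hiter : ∀ k, ‖xbar k - xstar‖ ^ 2 ≤ s ^ k * ‖xbar 0 - xstar‖ ^ 2 := by
    intro k
    induction k with
    | zero => simp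
    | succ n ih =>
      calc ‖xbar (n + 1) - xstar‖ ^ 2 ≤ s * ‖xbar n - xstar‖ ^ 2 := step n
        _ ≤ s * (s ^ n * ‖xbar 0 - xstar‖ ^ 2) := by
            exact mul_le_mul_of_nonneg_left ih hs0
        _ = s ^ (n + 1) * ‖xbar 0 - xstar‖ ^ 2 := by ring
  intro k
  set q : ℝ := 2 - 4 * α * μ * L / (μ + L) with hq
  have hq2s : q = 2 * s := by rw [hq, hs]; ring
  have hq0 : 0 ≤ q := by rw [hq2s]; linarith
  have hsq : s ≤ q := by rw [hq2s]; linarith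
  have hnorm : ‖xbar k - xstar‖ ≤ Real.sqrt (s ^ k) * ‖xbar 0 - xstar‖ := by
    have h := hiter k
    calc ‖xbar k - xstar‖ = Real.sqrt (‖xbar k - xstar‖ ^ 2) := by
          rw [Real.sqrt_sq (norm_nonneg _)]
      _ ≤ Real.sqrt (s ^ k * ‖xbar 0 - xstar‖ ^ 2) := Real.sqrt_le_sqrt h
      _ = Real.sqrt (s ^ k) * ‖xbar 0 - xstar‖ := by
          rw [Real.sqrt_mul (pow_nonneg hs0 k), Real.sqrt_sq (norm_nonneg _)]
  have hsqrt_eq : Real.sqrt (s ^ k) = s ^ ((k : ℝ) / 2) := by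
    rw [Real.sqrt_eq_rpow, ← Real.rpow_natCast s k, ← Real.rpow_mul hs0]
    congr 1
    ring
  have hrpow : s ^ ((k : ℝ) / 2) ≤ q ^ ((k : ℝ) / 2) :=
    Real.rpow_le_rpow hs0 hsq (by positivity)
  have hterm : 0 ≤ Real.sqrt (2 / (1 - q)) * ‖ε‖ :=
    mul_nonneg (Real.sqrt_nonneg _) (norm_nonneg _)
  have hmul : Real.sqrt (s ^ k) * ‖xbar 0 - xstar‖ ≤ q ^ ((k : ℝ) / 2) * ‖xbar 0 - xstar‖ := by
    rw [hsqrt_eq]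
    exact mul_le_mul_of_nonneg_right hrpow (norm_nonneg _)
  linarith
end
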